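/- arXiv:2009.03417 — 3 statements merged into one kernel-verified Lean document; each statement's English description precedes it below -/
import Mathlib

section
/- A d-feature linear context logit is identifiable from a choice dataset D if and only if the span of the set of vectors { [x_C; 1] ⊗ (x_i − x_C) : C ∈ C_D, i ∈ C } equals ℝ^{d²+d}, where [x_C; 1] ∈ ℝ^{d+1} is the mean feature vector of C appended with a 1, ⊗ denotes the Kronecker product of vectors, and C_D is the set of distinct choice sets appearing in D. -/
open Finset Matrix

/-- The mean feature vector of a choice set `C`. -/
noncomputable def meanFeat {ι : Type*} {d : ℕ} (x : ι → Fin d → ℝ) (C : Finset ι) :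
    Fin d → ℝ :=
  (C.card : ℝ)⁻¹ • ∑ j ∈ C, x j

/-- Choice probabilities of the linear context logit (LCL) with parameters `θ, A`. -/
noncomputable def lclProb {ι : Type*} {d : ℕ} (x : ι → Fin d → ℝ)
    (θ : Fin d → ℝ) (A : Matrix (Fin d) (Fin d) ℝ) (C : Finset ι) (i : ι) : ℝ :=
  Real.exp ((θ + A.mulVec (meanFeat x C)) ⬝ᵥ x i) /
    ∑ j ∈ C, Real.exp ((θ + A.mulVec (meanFeat x C)) ⬝ᵥ x j)

/-
The logit is invariant exactly under adding a constant to all utilities of a choice set, so two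
parameter pairs give the same probabilities on `C` iff their difference `(δθ, δA)` makes
`(δθ + δA x_C) ⬝ᵥ x_i` constant on `C`, i.e. `(δθ + δA x_C) ⬝ᵥ (x_i - x_C) = 0` for `i ∈ C`.
Laying `(θ, A)` out as a vector of `ℝ^{(d+1)d}`, this number is its dot product with
`[x_C; 1] ⊗ (x_i - x_C)`. Identifiability thus says that only the zero vector is orthogonal to
all these vectors, which is to say that they span.
-/

section LinearAlgebra

variable {K n : Type*} [Field K] [Fintype n] [DecidableEq n]

theorem span_eq_top_iff_forall_dotProduct_eq_zero (S : Set (n → K)) :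
    Submodule.span K S = ⊤ ↔ ∀ w : n → K, (∀ v ∈ S, v ⬝ᵥ w = 0) → w = 0 := by
  rw [← Submodule.dualAnnihilator_eq_bot_iff, Submodule.eq_bot_iff,
    ← (dotProductEquiv K n).toEquiv.forall_congr_right]
  simp only [← SetLike.mem_coe, Submodule.coe_dualAnnihilator_span]
  simp [Set.subset_def, dotProduct_comm]

end LinearAlgebra

section Encoding

variable {R : Type*} [CommSemiring R] {d : ℕ}

-- `[m; 1] ⊗ y` in the paper's notation.
def augKron (m y : Fin d → R) : Fin (d + 1) × Fin d → R :=
  fun q => (Fin.snoc m 1 : Fin (d + 1) → R) q.1 * y q.2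

variable (R d) in
def lclParamEquiv :
    ((Fin d → R) × Matrix (Fin d) (Fin d) R) ≃ₗ[R] (Fin (d + 1) × Fin d → R) where
  toFun p q := (Fin.snoc (p.2 q.2) (p.1 q.2) : Fin (d + 1) → R) q.1
  invFun w := (fun b => w (Fin.last d, b), fun b a => w (a.castSucc, b))
  map_add' p p' := by
    funext ⟨a, b⟩
    induction a using Fin.lastCases <;> simp
  map_smul' c p := by
    funext ⟨a, b⟩
    induction a using Fin.lastCases <;> simp
  left_inv p := by ext <;> simp
  right_inv w := by
    funext ⟨a, b⟩
    induction a using Fin.lastCases <;> simp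

theorem augKron_dotProduct_lclParamEquiv (θ : Fin d → R) (A : Matrix (Fin d) (Fin d) R)
    (m y : Fin d → R) : augKron m y ⬝ᵥ lclParamEquiv R d (θ, A) = (θ + A *ᵥ m) ⬝ᵥ y := by
  simp only [augKron, lclParamEquiv, LinearEquiv.coe_mk, LinearMap.coe_mk, AddHom.coe_mk,
    dotProduct, Fintype.sum_prod_type, Fin.sum_univ_castSucc, Fin.snoc_castSucc, Fin.snoc_last,
    Pi.add_apply, mulVec, one_mul, sum_mul, add_mul]
  rw [sum_comm, ← sum_add_distrib]
  refine sum_congr rfl fun b _ => ?_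
  rw [add_comm, mul_comm (y b)]
  exact congrArg _ (sum_congr rfl fun a _ => by ring)

end Encoding

section Logit

open Real

variable {ι : Type*}

theorem exp_div_sum_exp_eq_iff (C : Finset ι) (u u' : ι → ℝ) :
    (∀ i ∈ C, exp (u i) / ∑ j ∈ C, exp (u j) = exp (u' i) / ∑ j ∈ C, exp (u' j)) ↔
      ∃ c, ∀ i ∈ C, u i - u' i = c := by
  constructor
  · intro h
    refine ⟨log ((∑ j ∈ C, exp (u j)) / ∑ j ∈ C, exp (u' j)), fun i hi => ?_⟩
    have hS : 0 < ∑ j ∈ C, exp (u j) := sum_pos (fun _ _ => exp_pos _) ⟨i, hi⟩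
    have hS' : 0 < ∑ j ∈ C, exp (u' j) := sum_pos (fun _ _ => exp_pos _) ⟨i, hi⟩
    have hratio : exp (u i - u' i) = (∑ j ∈ C, exp (u j)) / ∑ j ∈ C, exp (u' j) := by
      have hprob := h i hi
      rw [div_eq_div_iff hS.ne' hS'.ne'] at hprob
      rw [exp_sub, div_eq_div_iff (exp_pos _).ne' hS'.ne', hprob, mul_comm]
    rw [← hratio, log_exp]
  · rintro ⟨c, hc⟩ i hi
    have hexp : ∀ j ∈ C, exp (u j) = exp c * exp (u' j) := fun j hj => by
      rw [← exp_add, ← hc j hj, sub_add_cancel]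
    rw [sum_congr rfl hexp, ← mul_sum, hexp i hi, mul_div_mul_left _ _ (exp_ne_zero c)]

theorem dotProduct_meanFeat {d : ℕ} (v : Fin d → ℝ) (x : ι → Fin d → ℝ) (C : Finset ι) :
    v ⬝ᵥ meanFeat x C = (C.card : ℝ)⁻¹ * ∑ j ∈ C, v ⬝ᵥ x j := by
  rw [meanFeat, dotProduct_smul, dotProduct_sum, smul_eq_mul]

theorem exists_forall_dotProduct_eq_iff_sub_meanFeat {d : ℕ} (v : Fin d → ℝ) (x : ι → Fin d → ℝ)
    (C : Finset ι) :
    (∃ c, ∀ i ∈ C, v ⬝ᵥ x i = c) ↔ ∀ i ∈ C, v ⬝ᵥ (x i - meanFeat x C) = 0 := by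
  constructor
  · rintro ⟨c, hc⟩ i hi
    have hcard : (C.card : ℝ) ≠ 0 := Nat.cast_ne_zero.2 (card_ne_zero_of_mem hi)
    have hmean : v ⬝ᵥ meanFeat x C = c := by
      rw [dotProduct_meanFeat, sum_congr rfl hc, sum_const, nsmul_eq_mul,
        inv_mul_cancel_left₀ hcard]
    rw [dotProduct_sub, hc i hi, hmean, sub_self]
  · intro h
    exact ⟨v ⬝ᵥ meanFeat x C, fun i hi => sub_eq_zero.1 (dotProduct_sub v _ _ ▸ h i hi)⟩

theorem forall_lclProb_eq_iff {d : ℕ} (x : ι → Fin d → ℝ) (θ θ' : Fin d → ℝ)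
    (A A' : Matrix (Fin d) (Fin d) ℝ) (C : Finset ι) :
    (∀ i ∈ C, lclProb x θ A C i = lclProb x θ' A' C i) ↔
      ∀ i ∈ C, augKron (meanFeat x C) (x i - meanFeat x C) ⬝ᵥ
        (lclParamEquiv ℝ d (θ, A) - lclParamEquiv ℝ d (θ', A')) = 0 := by
  simp only [lclProb, exp_div_sum_exp_eq_iff, ← map_sub, Prod.mk_sub_mk,
    augKron_dotProduct_lclParamEquiv, ← sub_dotProduct]
  rw [sub_mulVec, add_sub_add_comm, exists_forall_dotProduct_eq_iff_sub_meanFeat]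

end Logit

theorem statement3_general {ι : Type*} [DecidableEq ι] {d : ℕ} (x : ι → Fin d → ℝ)
    (D : Finset (ι × Finset ι)) :
    (∀ (θ θ' : Fin d → ℝ) (A A' : Matrix (Fin d) (Fin d) ℝ),
        (∀ C ∈ D.image Prod.snd, ∀ i ∈ C, lclProb x θ A C i = lclProb x θ' A' C i) →
        θ = θ' ∧ A = A')
      ↔ Submodule.span ℝ
          { v : Fin (d + 1) × Fin d → ℝ |
            ∃ C ∈ D.image Prod.snd, ∃ i ∈ C,
              v = fun q => (Fin.snoc (meanFeat x C) 1 : Fin (d + 1) → ℝ) q.1 *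
                    (x i - meanFeat x C) q.2 } = ⊤ := by
  set e := lclParamEquiv ℝ d
  set S := { v | ∃ C ∈ D.image Prod.snd, ∃ i ∈ C,
    v = augKron (meanFeat x C) (x i - meanFeat x C) }
  have hprob_iff : ∀ θ θ' A A', (∀ C ∈ D.image Prod.snd, ∀ i ∈ C,
      lclProb x θ A C i = lclProb x θ' A' C i) ↔
      ∀ v ∈ S, v ⬝ᵥ (e (θ, A) - e (θ', A')) = 0 := by
    intro θ θ' A A'
    simp only [forall_lclProb_eq_iff, S, Set.mem_ofPred_eq, forall_exists_index, and_imp]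
    exact ⟨fun h v C hC i hi hv => hv ▸ h C hC i hi, fun h C hC i hi => h _ C hC i hi rfl⟩
  change _ ↔ Submodule.span ℝ S = ⊤
  rw [span_eq_top_iff_forall_dotProduct_eq_zero]
  constructor
  · intro hid w hw
    obtain ⟨⟨θ, A⟩, rfl⟩ := e.surjective w
    have hsame : ∀ v ∈ S, v ⬝ᵥ (e (θ, A) - e (0, 0)) = 0 := by
      rwa [Prod.mk_zero_zero, map_zero, sub_zero]
    obtain ⟨rfl, rfl⟩ := hid θ 0 A 0 ((hprob_iff θ 0 A 0).2 hsame)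
    exact e.map_zero
  · intro h θ θ' A A' hprob
    have hdiff := h _ ((hprob_iff θ θ' A A').1 hprob)
    rwa [sub_eq_zero, e.injective.eq_iff, Prod.mk.injEq] at hdiff

/-- A `d`-feature linear context logit is identifiable from a dataset `D`
(i.e., any two parameter pairs producing identical choice probabilities on every choice
set of `D` coincide) if and only if the span of
`{ [x_C; 1] ⊗ (x_i − x_C) : C ∈ C_D, i ∈ C }` is all of `ℝ^{d²+d}`. -/
theorem statement3 {ι : Type*} [DecidableEq ι] {d : ℕ} (x : ι → Fin d → ℝ)
    (D : Finset (ι × Finset ι)) (hD : ∀ p ∈ D, p.1 ∈ p.2 ∧ p.2.Nonempty) :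
    (∀ (θ θ' : Fin d → ℝ) (A A' : Matrix (Fin d) (Fin d) ℝ),
        (∀ C ∈ D.image Prod.snd, ∀ i ∈ C, lclProb x θ A C i = lclProb x θ' A' C i) →
        θ = θ' ∧ A = A')
      ↔ Submodule.span ℝ
          { v : Fin (d + 1) × Fin d → ℝ |
            ∃ C ∈ D.image Prod.snd, ∃ i ∈ C,
              v = fun q => (Fin.snoc (meanFeat x C) 1 : Fin (d + 1) → ℝ) q.1 *
                    (x i - meanFeat x C) q.2 } = ⊤ :=
  statement3_general x D
end

section
/- If a choice dataset contains d+1 distinct choice sets C_0, …, C_d such that (i) the mean feature vectors x_{C_0}, …, x_{C_d} ∈ ℝ^d are affinely independent, and (ii) each choice set C_i contains some set of d+1 items whose feature vectors are affinely independent, then the d-feature linear context logit is uniquely identifiable from the dataset: any two parameter pairs (θ, A) and (θ', A') producing identical choice probabilities on every choice set in the dataset must be equal. -/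
/-!
Within one choice set `C` the LCL is a multinomial logit with weight `w_C = θ + A x_C`, and the
ratio of the probabilities of two items `i, j ∈ C` is `exp (w_C ⬝ (x_i - x_j))`. So the data
determine `w_C ⬝ (x_i - x_j)` for all items of `C`; since the differences of `d + 1` affinely
independent items span `ℝ^d`, they determine `w_C`. Finally `x_C ↦ θ + A x_C` is an affine map,
and knowing it at `d + 1` affinely independent points `x_{C_k}` determines its linear part `A`,
and then `θ`.
-/

open Finset Matrix

theorem AffineIndependent.linearMap_eq_zero {k V W P ι : Type*} [Field k] [AddCommGroup V]
    [Module k V] [FiniteDimensional k V] [AddTorsor V P] [AddCommGroup W] [Module k W]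
    [Fintype ι] {y : ι → P} (hy : AffineIndependent k y)
    (hcard : Fintype.card ι = Module.finrank k V + 1) {f : V →ₗ[k] W}
    (hf : ∀ i j, f (y i -ᵥ y j) = 0) : f = 0 := by
  have hspan : vectorSpan k (Set.range y) = ⊤ :=
    AffineSubspace.vectorSpan_eq_top_of_affineSpan_eq_top k V P
      (hy.affineSpan_eq_top_iff_card_eq_finrank_add_one.mpr hcard)
  rw [← LinearMap.ker_eq_top, eq_top_iff, ← hspan, vectorSpan_def, Submodule.span_le]
  rintro - ⟨-, ⟨i, rfl⟩, -, ⟨j, rfl⟩, rfl⟩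
  exact hf i j

theorem AffineIndependent.eq_zero_of_dotProduct_sub {k n ι : Type*} [Field k] [Fintype n]
    [DecidableEq n] [Fintype ι] {y : ι → n → k} (hy : AffineIndependent k y)
    (hcard : Fintype.card ι = Fintype.card n + 1) {v : n → k}
    (hv : ∀ i j, v ⬝ᵥ (y i - y j) = 0) : v = 0 := by
  have hf : dotProductEquiv k n v = 0 := hy.linearMap_eq_zero (by simpa using hcard) hv
  exact (dotProductEquiv k n).map_eq_zero_iff.mp hf

theorem AffineIndependent.eq_zero_of_mulVec_sub {k m n ι : Type*} [Field k] [Fintype m]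
    [Fintype n] [DecidableEq n] [Fintype ι] {y : ι → n → k} (hy : AffineIndependent k y)
    (hcard : Fintype.card ι = Fintype.card n + 1) {B : Matrix m n k}
    (hB : ∀ i j, B *ᵥ (y i - y j) = 0) : B = 0 := by
  have hf : Matrix.toLin' B = 0 := hy.linearMap_eq_zero (by simpa using hcard) hB
  simpa using hf

theorem sub_eq_sub_of_softmax_eq {ι : Type*} {C : Finset ι} {f g : ι → ℝ}
    (h : ∀ j ∈ C, Real.exp (f j) / ∑ l ∈ C, Real.exp (f l)
      = Real.exp (g j) / ∑ l ∈ C, Real.exp (g l))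
    {i i₀ : ι} (hi : i ∈ C) (hi₀ : i₀ ∈ C) : f i - f i₀ = g i - g i₀ := by
  have ratio : ∀ u : ι → ℝ, Real.exp (u i - u i₀) =
      (Real.exp (u i) / ∑ l ∈ C, Real.exp (u l)) /
        (Real.exp (u i₀) / ∑ l ∈ C, Real.exp (u l)) := by
    intro u
    have : (∑ l ∈ C, Real.exp (u l)) ≠ 0 :=
      (sum_pos (fun l _ => Real.exp_pos (u l)) ⟨i, hi⟩).ne'
    rw [Real.exp_sub]
    field_simp
  apply Real.exp_injective
  rw [ratio f, ratio g, h i hi, h i₀ hi₀]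

theorem lclWeight_eq_of_lclProb_eq {ι : Type*} {d : ℕ} {x : ι → Fin d → ℝ} {C : Finset ι}
    {θ θ' : Fin d → ℝ} {A A' : Matrix (Fin d) (Fin d) ℝ}
    (h : ∀ i ∈ C, lclProb x θ A C i = lclProb x θ' A' C i)
    {it : Fin (d + 1) → ι} (hit : ∀ j, it j ∈ C)
    (haff : AffineIndependent ℝ (fun j => x (it j))) :
    θ + A *ᵥ meanFeat x C = θ' + A' *ᵥ meanFeat x C := by
  refine sub_eq_zero.mp (haff.eq_zero_of_dotProduct_sub (by simp) fun i j => ?_)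
  have := sub_eq_sub_of_softmax_eq h (hit i) (hit j)
  rw [sub_dotProduct, dotProduct_sub, dotProduct_sub]
  linarith

theorem statement5_general {ι : Type*} [DecidableEq ι] {d : ℕ} (x : ι → Fin d → ℝ)
    (D : Finset (ι × Finset ι))
    (Cs : Fin (d + 1) → Finset ι) (hmem : ∀ k, Cs k ∈ D.image Prod.snd)
    (haff : AffineIndependent ℝ (fun k => meanFeat x (Cs k)))
    (hitems : ∀ k, ∃ it : Fin (d + 1) → ι,
        (∀ j, it j ∈ Cs k) ∧ AffineIndependent ℝ (fun j => x (it j)))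
    (θ θ' : Fin d → ℝ) (A A' : Matrix (Fin d) (Fin d) ℝ)
    (heq : ∀ C ∈ D.image Prod.snd, ∀ i ∈ C, lclProb x θ A C i = lclProb x θ' A' C i) :
    θ = θ' ∧ A = A' := by
  have hweight : ∀ k, θ + A *ᵥ meanFeat x (Cs k) = θ' + A' *ᵥ meanFeat x (Cs k) := fun k =>
    have ⟨_, hit, hitaff⟩ := hitems k
    lclWeight_eq_of_lclProb_eq (heq _ (hmem k)) hit hitaff
  have hdiff : ∀ k, A *ᵥ meanFeat x (Cs k) - A' *ᵥ meanFeat x (Cs k) = θ' - θ := fun k => by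
    rw [sub_eq_sub_iff_add_eq_add, add_comm]
    exact hweight k
  have hA : A = A' := by
    refine sub_eq_zero.mp (haff.eq_zero_of_mulVec_sub (by simp) fun i j => ?_)
    rw [mulVec_sub, sub_mulVec, sub_mulVec, hdiff i, hdiff j, sub_self]
  subst hA
  exact ⟨add_right_cancel (hweight 0), rfl⟩

/-- If a choice dataset contains `d+1` distinct choice sets whose mean
feature vectors are affinely independent, and each of these choice sets contains `d+1`
items with affinely independent feature vectors, then the `d`-feature LCL is uniquely
identifiable: any two parameter pairs producing identical choice probabilities on every
choice set in the dataset must be equal. -/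
theorem statement5 {ι : Type*} [DecidableEq ι] {d : ℕ} (x : ι → Fin d → ℝ)
    (D : Finset (ι × Finset ι)) (hD : ∀ p ∈ D, p.1 ∈ p.2 ∧ p.2.Nonempty)
    (Cs : Fin (d + 1) → Finset ι) (hmem : ∀ k, Cs k ∈ D.image Prod.snd)
    (hdist : Function.Injective Cs)
    (haff : AffineIndependent ℝ (fun k => meanFeat x (Cs k)))
    (hitems : ∀ k, ∃ it : Fin (d + 1) → ι,
        (∀ j, it j ∈ Cs k) ∧ AffineIndependent ℝ (fun j => x (it j)))
    (θ θ' : Fin d → ℝ) (A A' : Matrix (Fin d) (Fin d) ℝ)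
    (heq : ∀ C ∈ D.image Prod.snd, ∀ i ∈ C, lclProb x θ A C i = lclProb x θ' A' C i) :
    θ = θ' ∧ A = A' :=
  statement5_general x D Cs hmem haff hitems θ θ' A A' heq
end

section
/- The negative log-likelihood of the linear context logit, −ℓ(θ, A; D) = ∑_{(i,C)∈D} [ −(θ + A x_C)^T x_i + log ∑_{j∈C} exp((θ + A x_C)^T x_j) ], is a convex function of the parameters (θ, A) jointly on ℝ^d × ℝ^{d×d} (equivalently, the LCL likelihood function is log-concave in its parameters). -/
open Finset Matrix

/-!
Each summand of the negative log-likelihood is `u ↦ -u i + log ∑_{j ∈ C} exp (u j)` evaluated at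
the utilities `u j = (θ + A x_C)ᵀ x_j`. For a fixed choice set `C` these utilities depend
linearly on `(θ, A)`, because `x_C` does not depend on the parameters. Log-sum-exp is convex by
Hölder's inequality, so each summand is a convex function precomposed with a linear map.
-/

open Real

theorem convexOn_finsetSum {𝕜 E β α : Type*} [Semiring 𝕜] [PartialOrder 𝕜] [AddCommMonoid E]
    [AddCommMonoid β] [PartialOrder β] [IsOrderedAddMonoid β] [SMul 𝕜 E] [Module 𝕜 β]
    {s : Set E} (hs : Convex 𝕜 s) {t : Finset α} {f : α → E → β}
    (hf : ∀ i ∈ t, ConvexOn 𝕜 s (f i)) :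
    ConvexOn 𝕜 s (fun e => ∑ i ∈ t, f i e) := by
  classical
  induction t using Finset.induction_on with
  | empty => simpa using convexOn_const (0 : β) hs
  | insert i t hi ih =>
    simp only [Finset.sum_insert hi]
    exact (hf i (mem_insert_self i t)).add (ih fun j hj => hf j (mem_insert_of_mem hj))

section LogSumExp

variable {ι : Type*} (s : Finset ι)

/-- Hölder's inequality with exponents `a⁻¹` and `b⁻¹`, applied to `exp (a u)` and `exp (b v)`. -/
theorem sum_exp_add_le_rpow_mul_rpow {a b : ℝ} (ha : 0 < a) (hb : 0 < b) (hab : a + b = 1)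
    (u v : ι → ℝ) :
    ∑ j ∈ s, exp (a * u j + b * v j) ≤
      (∑ j ∈ s, exp (u j)) ^ a * (∑ j ∈ s, exp (v j)) ^ b := by
  have hexp : ∀ {c : ℝ}, 0 < c → ∀ t : ℝ, exp (c * t) ^ c⁻¹ = exp t := fun hc t => by
    rw [← exp_mul, mul_right_comm, mul_inv_cancel₀ hc.ne', one_mul]
  have holder := inner_le_Lp_mul_Lq_of_nonneg s (HolderConjugate.inv_inv ha hb hab)
    (f := fun j => exp (a * u j)) (g := fun j => exp (b * v j))
    (fun j _ => (exp_pos _).le) (fun j _ => (exp_pos _).le)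
  simpa only [← exp_add, hexp ha, hexp hb, one_div, inv_inv] using holder

theorem convexOn_log_sum_exp (hs : s.Nonempty) :
    ConvexOn ℝ Set.univ (fun u : ι → ℝ => log (∑ j ∈ s, exp (u j))) := by
  refine convexOn_iff_forall_pos.mpr ⟨convex_univ, fun u _ v _ a b ha hb hab => ?_⟩
  have hsum : ∀ w : ι → ℝ, 0 < ∑ j ∈ s, exp (w j) := fun w =>
    sum_pos (fun j _ => exp_pos _) hs
  calc log (∑ j ∈ s, exp ((a • u + b • v) j))
      ≤ log ((∑ j ∈ s, exp (u j)) ^ a * (∑ j ∈ s, exp (v j)) ^ b) :=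
        log_le_log (hsum _) (sum_exp_add_le_rpow_mul_rpow s ha hb hab u v)
    _ = a • log (∑ j ∈ s, exp (u j)) + b • log (∑ j ∈ s, exp (v j)) := by
        rw [log_mul (by positivity) (by positivity), log_rpow (hsum u), log_rpow (hsum v)]
        rfl

end LogSumExp

noncomputable def contextUtility {ι n : Type*} [Fintype n] (x : ι → n → ℝ) (xC : n → ℝ) :
    ((n → ℝ) × Matrix n n ℝ) →ₗ[ℝ] (ι → ℝ) where
  toFun θA j := (θA.1 + θA.2 *ᵥ xC) ⬝ᵥ x j
  map_add' θA θA' := by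
    ext j
    simp only [Prod.fst_add, Prod.snd_add, add_mulVec, add_dotProduct, Pi.add_apply]
    ring
  map_smul' c θA := by
    ext j
    simp only [Prod.smul_fst, Prod.smul_snd, smul_mulVec, ← smul_add, smul_dotProduct,
      RingHom.id_apply, Pi.smul_apply]

/-- The negative log-likelihood of the linear context logit,
`−ℓ(θ, A; D) = ∑_{(i,C)∈D} [ −(θ + A x_C)ᵀ x_i + log ∑_{j∈C} exp((θ + A x_C)ᵀ x_j) ]`,
is jointly convex in the parameters `(θ, A)` (equivalently, the LCL likelihood is
log-concave in its parameters). -/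
theorem statement7 {ι : Type*} {d : ℕ} (x : ι → Fin d → ℝ)
    (D : Finset (ι × Finset ι)) (hD : ∀ p ∈ D, p.1 ∈ p.2 ∧ p.2.Nonempty) :
    ConvexOn ℝ Set.univ
      (fun θA : (Fin d → ℝ) × Matrix (Fin d) (Fin d) ℝ =>
        ∑ p ∈ D,
          (-((θA.1 + θA.2.mulVec (meanFeat x p.2)) ⬝ᵥ x p.1) +
            Real.log (∑ j ∈ p.2,
              Real.exp ((θA.1 + θA.2.mulVec (meanFeat x p.2)) ⬝ᵥ x j)))) := by
  refine convexOn_finsetSum convex_univ fun p hp => ?_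
  have hnll : ConvexOn ℝ Set.univ (fun u : ι → ℝ => -u p.1 + log (∑ j ∈ p.2, exp (u j))) :=
    ((-LinearMap.proj p.1 : (ι → ℝ) →ₗ[ℝ] ℝ).convexOn convex_univ).add
      (convexOn_log_sum_exp p.2 (hD p hp).2)
  exact hnll.comp_linearMap (contextUtility x (meanFeat x p.2))
end
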